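/- Let K be a field, let V and W be finite-dimensional K-vector spaces, let ℓ : V → W be a bijective K-linear map, and let u : W → V be a K-linear map such that the composition ℓ ∘ u : W → W is bijective. Then there exists a polynomial p ∈ K[X] such that the linear map u ∘ p(ℓ ∘ u) : W → V is a two-sided inverse of ℓ, i.e. ℓ ∘ (u ∘ p(ℓ ∘ u)) = id_W and (u ∘ p(ℓ ∘ u)) ∘ ℓ = id_V. -/

import Mathlib

/-!
The endomorphism `f = ℓ ∘ u` of the finite-dimensional space `W` is invertible and integral over
`K`, so its inverse lies in `K[f]`: it is a nonzerodivisor of the Artinian ring `K[f]`, hence a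
unit there. Writing `f⁻¹ = p(f)`, the map `u ∘ p(f)` is a right inverse of `ℓ`, and a right
inverse of an injective map is a two-sided inverse.
-/

open Polynomial nonZeroDivisors

theorem IsIntegral.exists_aeval_eq_inv {K A : Type*} [Field K] [Ring A] [Algebra K A] {a : Aˣ}
    (hi : IsIntegral K (a : A)) : ∃ p : K[X], aeval (a : A) p = ↑a⁻¹ := by
  let B := Algebra.adjoin K {(a : A)}
  let b : B := ⟨a, Algebra.self_mem_adjoin_singleton K _⟩
  have hb : b ∈ B⁰ := comap_nonZeroDivisors_le_of_injective (f := B.val) Subtype.val_injective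
    a.isUnit.mem_nonZeroDivisors
  obtain ⟨c, hcb⟩ := IsArtinianRing.isUnit_of_isIntegral_of_nonZeroDivisor
    ((isIntegral_algHom_iff B.val Subtype.val_injective (x := b)).mp hi) hb
  have hinv : ((c⁻¹ : Bˣ) : B).1 = ↑a⁻¹ := by
    rw [eq_comm, Units.inv_eq_of_mul_eq_one_right]
    exact congrArg Subtype.val (hcb ▸ c.mul_inv)
  obtain ⟨p, hp⟩ : (↑a⁻¹ : A) ∈ (aeval (R := K) (a : A)).range := by
    rw [← Algebra.adjoin_singleton_eq_range_aeval, ← hinv]; exact (c⁻¹ : Bˣ).1.2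
  exact ⟨p, hp⟩

theorem inverse_via_correspondence_general
    (K : Type*) [Field K] (V W : Type*) [AddCommGroup V] [Module K V]
    [AddCommGroup W] [Module K W] [FiniteDimensional K W]
    (ℓ : V →ₗ[K] W) (u : W →ₗ[K] V)
    (hℓ : Function.Bijective ℓ) (hℓu : Function.Bijective (ℓ ∘ₗ u)) :
    ∃ p : Polynomial K,
      ℓ ∘ₗ (u ∘ₗ (Polynomial.aeval (ℓ ∘ₗ u : Module.End K W) p : W →ₗ[K] W))
        = LinearMap.id ∧
      (u ∘ₗ (Polynomial.aeval (ℓ ∘ₗ u : Module.End K W) p : W →ₗ[K] W)) ∘ₗ ℓ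
        = LinearMap.id := by
  set f : Module.End K W := ℓ ∘ₗ u
  have hf : IsUnit f := (Module.End.isUnit_iff f).mpr hℓu
  obtain ⟨p, hp⟩ := (Algebra.IsIntegral.isIntegral (R := K) f).exists_aeval_eq_inv (a := hf.unit)
  rw [IsUnit.unit_spec] at hp
  have hright : ℓ ∘ₗ (u ∘ₗ (aeval f p : W →ₗ[K] W)) = LinearMap.id := by
    change f * aeval f p = 1
    rw [hp, IsUnit.mul_val_inv]
  refine ⟨p, hright, (LinearMap.cancel_left hℓ.injective).mp ?_⟩
  rw [← LinearMap.comp_assoc, hright, LinearMap.id_comp, LinearMap.comp_id]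

/-- If ℓ : V → W is bijective linear, u : W → V is linear and ℓ ∘ u is bijective,
then u composed with a polynomial in ℓ ∘ u is a two-sided inverse of ℓ
(the linear-algebra content of Lemma 2.2 of the paper). -/
theorem inverse_via_correspondence
    (K : Type*) [Field K] (V W : Type*) [AddCommGroup V] [Module K V]
    [AddCommGroup W] [Module K W] [FiniteDimensional K V] [FiniteDimensional K W]
    (ℓ : V →ₗ[K] W) (u : W →ₗ[K] V)
    (hℓ : Function.Bijective ℓ) (hℓu : Function.Bijective (ℓ ∘ₗ u)) :
    ∃ p : Polynomial K,
      ℓ ∘ₗ (u ∘ₗ (Polynomial.aeval (ℓ ∘ₗ u : Module.End K W) p : W →ₗ[K] W))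
        = LinearMap.id ∧
      (u ∘ₗ (Polynomial.aeval (ℓ ∘ₗ u : Module.End K W) p : W →ₗ[K] W)) ∘ₗ ℓ
        = LinearMap.id :=
  inverse_via_correspondence_general K V W ℓ u hℓ hℓu
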